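/- Let M be a finite free Ẑ-module with a decomposition M = ⊕_{i=1}^n M_i into nonzero finite free Ẑ-submodules, and let T ⊆ Aut_Ẑ(M) be a closed subgroup of generalized homotheties with respect to this decomposition (every φ ∈ T preserves each M_i and acts on it by a homothety) which is full: for each i the image T_i ⊆ Ẑ^× of T has finite coexponent and the kernel of T ↠ T_i has finite exponent. Then H^0(T, M ⊗_Ẑ ℚ/ℤ) is finite and H^1(T, M ⊗_Ẑ ℚ/ℤ) has finite exponent. -/

import Mathlib

/-!
Every `t ∈ T` acts on each `M_i` by a scalar, so `T` is commutative. Take the unit `u ∈ Ẑˣ`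
equal to `3` at `p = 2` and to `2` elsewhere, and `D` a common multiple of the coexponents:
then each `T_i` contains `uᴰ`, say `uᴰ = χ_i(s_i)`, and `uᴰ - 1` divides the integer
`m = (2ᴰ - 1)(3ᴰ - 1)` in `Ẑ`. On the `i`-th summand of `M ⊗ ℚ/ℤ` a fixed vector is killed
by `uᴰ - 1`, and for a cocycle `f` the relation `f(s_i t) = f(t s_i)` reads
`(uᴰ - 1) f(t) = (t - 1) f(s_i)`; multiplying by `m / (uᴰ - 1)` shows that `m` kills both
`H⁰` and `H¹`. Finally the `m`-torsion of `M ⊗ ℚ/ℤ ≅ (ℚ/ℤ)ʳ` is finite.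
-/

open scoped DirectSum

instance (p : Nat.Primes) : Fact (p : ℕ).Prime := ⟨p.2⟩

/-- The profinite completion `Ẑ` of `ℤ`, realized (via CRT) as the product of all rings
of `p`-adic integers. -/
abbrev Zhat : Type := ∀ p : Nat.Primes, ℤ_[(p : ℕ)]

/-- `ℤ_p` as a submodule of `ℚ_p`. -/
noncomputable def Zp (p : Nat.Primes) : Submodule ℤ_[(p : ℕ)] ℚ_[(p : ℕ)] :=
  LinearMap.range (Algebra.linearMap ℤ_[(p : ℕ)] ℚ_[(p : ℕ)])

/-- The `p`-primary component `ℚ_p/ℤ_p` of `ℚ/ℤ`. -/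
abbrev QmodZp (p : Nat.Primes) := ℚ_[(p : ℕ)] ⧸ Zp p

/-- `ℚ_p/ℤ_p` is a module over `Ẑ` via the projection `Ẑ → ℤ_p`. -/
noncomputable instance (p : Nat.Primes) : Module Zhat (QmodZp p) :=
  Module.compHom _ (Pi.evalRingHom (fun p : Nat.Primes => ℤ_[(p : ℕ)]) p)

/-- `ℚ/ℤ ≅ ⨁_p ℚ_p/ℤ_p` as a module over `Ẑ`; the units `Ẑˣ` act by homotheties. -/
abbrev QZ : Type := ⨁ p : Nat.Primes, QmodZp p

open TensorProduct

namespace PadicInt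

variable {p : ℕ} [hp : Fact p.Prime]

theorem isUnit_natCast_of_not_dvd {n : ℕ} (h : ¬p ∣ n) : IsUnit (n : ℤ_[p]) :=
  isUnit_iff.2 (norm_natCast_eq_one_iff.2 ((Nat.Prime.coprime_iff_not_dvd hp.out).2 h))

theorem natCast_dvd_pow_factorization {n : ℕ} (hn : n ≠ 0) :
    (n : ℤ_[p]) ∣ (p : ℤ_[p]) ^ n.factorization p := by
  conv_lhs => rw [← Nat.ordProj_mul_ordCompl_eq_self n p, Nat.cast_mul, Nat.cast_pow]
  exact (isUnit_natCast_of_not_dvd (Nat.not_dvd_ordCompl hp.out hn)).mul_right_dvd.2 dvd_rfl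

end PadicInt

namespace QmodZp

variable (p : Nat.Primes) {m : ℕ}

theorem eq_zero_of_nsmul_eq_zero (hpm : ¬(p : ℕ) ∣ m) {y : QmodZp p} (hy : m • y = 0) :
    y = 0 := by
  rw [← Nat.cast_smul_eq_nsmul ℤ_[(p : ℕ)]] at hy
  exact ((PadicInt.isUnit_natCast_of_not_dvd hpm).smul_eq_zero).1 hy

/-- Writing `m = pᵛ · unit`, an element of order dividing `m` is the class of `c / m` with
`c` a residue modulo `pᵛ`. -/
theorem finite_setOf_nsmul_eq_zero (hm : m ≠ 0) : {y : QmodZp p | m • y = 0}.Finite := by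
  set v := m.factorization p
  have : NeZero ((p : ℕ) ^ v) := ⟨pow_ne_zero _ p.2.ne_zero⟩
  refine (Set.finite_range fun c : ZMod ((p : ℕ) ^ v) =>
    (Submodule.Quotient.mk ((c.val : ℚ_[(p : ℕ)]) / m) : QmodZp p)).subset ?_
  rintro y (hy : m • y = 0)
  obtain ⟨q, rfl⟩ := Submodule.Quotient.mk_surjective _ y
  rw [← Submodule.Quotient.mk_smul, Submodule.Quotient.mk_eq_zero] at hy
  obtain ⟨a, ha⟩ := hy
  have ha' : (a : ℚ_[(p : ℕ)]) = m * q := by simpa [nsmul_eq_mul] using ha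
  refine ⟨PadicInt.toZModPow v a, ?_⟩
  have hker : a - ((PadicInt.toZModPow v a).val : ℤ_[(p : ℕ)]) ∈
      RingHom.ker (PadicInt.toZModPow (p := (p : ℕ)) v) := by
    simp [RingHom.mem_ker]
  rw [PadicInt.ker_toZModPow, Ideal.mem_span_singleton] at hker
  obtain ⟨b, hb⟩ := (PadicInt.natCast_dvd_pow_factorization hm).trans hker
  have hb' : (a : ℚ_[(p : ℕ)]) - ((PadicInt.toZModPow v a).val : ℚ_[(p : ℕ)]) = m * b := by
    simpa only [PadicInt.coe_sub, PadicInt.coe_mul, PadicInt.coe_natCast] using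
      congrArg ((↑) : ℤ_[(p : ℕ)] → ℚ_[(p : ℕ)]) hb
  refine (Submodule.Quotient.eq _).2 ⟨-b, ?_⟩
  have hm' : (m : ℚ_[(p : ℕ)]) ≠ 0 := Nat.cast_ne_zero.2 hm
  simp only [Algebra.linearMap_apply, map_neg, PadicInt.algebraMap_apply]
  field_simp
  linear_combination hb' - ha'

end QmodZp

theorem DirectSum.finite_setOf_nsmul_eq_zero {ι : Type*} {β : ι → Type*}
    [∀ i, AddCommMonoid (β i)] {m : ℕ} {S : Set ι} (hS : S.Finite)
    (hfin : ∀ i, {y : β i | m • y = 0}.Finite)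
    (htriv : ∀ i ∉ S, ∀ y : β i, m • y = 0 → y = 0) :
    {x : ⨁ i, β i | m • x = 0}.Finite := by
  have : Finite S := hS.to_subtype
  have hcomp {x : ⨁ i, β i} (hx : m • x = 0) (i : ι) : m • x i = 0 := by
    rw [← DFinsupp.nsmul_apply, hx, DirectSum.zero_apply]
  refine ((Set.Finite.pi' fun i : S => hfin i).subset ?_).of_finite_image
    (f := fun x (i : S) => x (i : ι)) ?_
  · rintro _ ⟨x, hx, rfl⟩ i
    exact hcomp hx i
  · intro x hx y hy hxy
    ext i
    by_cases hi : i ∈ S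
    · exact congrFun hxy ⟨i, hi⟩
    · rw [htriv i hi _ (hcomp hx i), htriv i hi _ (hcomp hy i)]

theorem QZ.finite_setOf_nsmul_eq_zero {m : ℕ} (hm : m ≠ 0) : {x : QZ | m • x = 0}.Finite :=
  DirectSum.finite_setOf_nsmul_eq_zero
    (S := {p : Nat.Primes | (p : ℕ) ∣ m})
    ((m.divisors.finite_toSet.preimage Nat.Primes.coe_nat_injective.injOn).subset
      fun _ hp => Nat.mem_divisors.2 ⟨hp, hm⟩)
    (fun p => QmodZp.finite_setOf_nsmul_eq_zero p hm)
    (fun p hp _ => QmodZp.eq_zero_of_nsmul_eq_zero p hp)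

theorem TensorProduct.finite_setOf_nsmul_eq_zero_of_free {R M A : Type*} [CommRing R]
    [AddCommGroup M] [Module R M] [Module.Free R M] [Module.Finite R M]
    [AddCommGroup A] [Module R A] {m : ℕ} (hA : {a : A | m • a = 0}.Finite) :
    {x : M ⊗[R] A | m • x = 0}.Finite := by
  let b := Module.Free.chooseBasis R M
  let e : M ⊗[R] A ≃ₗ[R] (Module.Free.ChooseBasisIndex R M → A) :=
    (b.equivFun.rTensor A).trans ((TensorProduct.comm R _ A).trans
      (TensorProduct.piScalarRight R R A _))
  refine ((Set.Finite.pi' fun _ => hA).preimage e.injective.injOn).subset fun x hx i => ?_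
  simpa using congrFun (congrArg e (hx : m • x = 0)) i

namespace DirectSum.IsInternal

variable {R M ι : Type*} [CommSemiring R] [AddCommMonoid M] [Module R M] [DecidableEq ι]
  {A : ι → Submodule R M}

theorem linearMap_ext (h : IsInternal A) {N : Type*} [AddCommMonoid N] [Module R N]
    {f g : M →ₗ[R] N} (hfg : ∀ i, ∀ x ∈ A i, f x = g x) : f = g := by
  have hle : ⨆ i, A i ≤ LinearMap.eqLocus f g := iSup_le fun i x hx => hfg i x hx
  rw [h.submodule_iSup_eq_top, top_le_iff, LinearMap.eqLocus_eq_top] at hle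
  exact hle

noncomputable def proj (h : IsInternal A) (i : ι) : M →ₗ[R] M :=
  (A i).subtype ∘ₗ DirectSum.component R ι (fun i => A i) i ∘ₗ
    (LinearEquiv.ofBijective (DirectSum.coeLinearMap A) h).symm.toLinearMap

theorem proj_mem (h : IsInternal A) (i : ι) (x : M) : h.proj i x ∈ A i :=
  Submodule.coe_mem _

theorem proj_of_mem (h : IsInternal A) {i : ι} {x : M} (hx : x ∈ A i) : h.proj i x = x := by
  simp [proj, ← DirectSum.apply_eq_component, h.ofBijective_coeLinearMap_of_mem hx]

theorem proj_of_mem_ne (h : IsInternal A) {i j : ι} {x : M} (hx : x ∈ A i) (hij : i ≠ j) :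
    h.proj j x = 0 := by
  simp [proj, ← DirectSum.apply_eq_component, h.ofBijective_coeLinearMap_of_mem_ne hij hx]

theorem sum_proj [Fintype ι] (h : IsInternal A) : ∑ i, h.proj i = LinearMap.id :=
  h.linearMap_ext fun i x hx => by
    rw [LinearMap.sum_apply, Finset.sum_eq_single i
      (fun j _ hji => h.proj_of_mem_ne hx hji.symm) (by simp), h.proj_of_mem hx,
      LinearMap.id_apply]

variable {t t' : M →ₗ[R] M} {c c' : ι → R}

theorem comp_proj (h : IsInternal A) (ht : ∀ i, ∀ x ∈ A i, t x = c i • x) (i : ι) :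
    t ∘ₗ h.proj i = c i • h.proj i :=
  LinearMap.ext fun x => ht i _ (h.proj_mem i x)

theorem proj_comp (h : IsInternal A) (ht : ∀ i, ∀ x ∈ A i, t x = c i • x) (i : ι) :
    h.proj i ∘ₗ t = c i • h.proj i :=
  h.linearMap_ext fun j x hx => by
    rw [LinearMap.comp_apply, LinearMap.smul_apply, ht j x hx, map_smul]
    rcases eq_or_ne j i with rfl | hji
    · rfl
    · rw [h.proj_of_mem_ne hx hji, smul_zero, smul_zero]

theorem commute (h : IsInternal A) (ht : ∀ i, ∀ x ∈ A i, t x = c i • x)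
    (ht' : ∀ i, ∀ x ∈ A i, t' x = c' i • x) :
    Commute t t' :=
  h.linearMap_ext fun i x hx => by
    rw [Module.End.mul_apply, Module.End.mul_apply, ht' i x hx, map_smul, ht i x hx,
      map_smul, ht' i x hx, smul_comm]

end DirectSum.IsInternal

theorem cocycle_sub_eq_of_commute {G N : Type*} [Mul G] [AddCommGroup N] {ρ : G → N → N}
    {f : G → N} (hf : ∀ g h, f (g * h) = f g + ρ g (f h)) {s t : G} (hst : Commute s t) :
    ρ s (f t) - f t = ρ t (f s) - f s := by
  have := (hf s t).symm.trans (hst.eq ▸ hf t s)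
  rw [sub_eq_sub_iff_add_eq_add, add_comm, this, add_comm]

section ScalarProjections

variable {R N : Type*} [CommRing R] [AddCommGroup N] [Module R N]

theorem nsmul_apply_eq_smul_apply_sub {P ρs : N →ₗ[R] N} {c w : R} {m : ℕ}
    (hP : P ∘ₗ ρs = c • P) (hm : (m : R) = (c - 1) * w) (z : N) :
    m • P z = w • P (ρs z - z) := by
  rw [← Nat.cast_smul_eq_nsmul R, hm, mul_comm, mul_smul, sub_smul, one_smul,
    ← LinearMap.smul_apply, ← hP, LinearMap.comp_apply, map_sub]

variable {G ι : Type*} [Fintype ι] {ρ : G → N →ₗ[R] N} {P : ι → N →ₗ[R] N} {χ : ι → G → R}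
  {m : ℕ}

theorem nsmul_eq_zero_of_forall_apply_eq_self (hsum : ∑ i, P i = LinearMap.id)
    (hPρ : ∀ i g, P i ∘ₗ ρ g = χ i g • P i) (hdvd : ∀ i, ∃ s, χ i s - 1 ∣ (m : R))
    {x : N} (hx : ∀ g, ρ g x = x) : m • x = 0 := by
  calc m • x = ∑ i, m • P i x := by
        rw [← Finset.smul_sum, ← LinearMap.sum_apply, hsum, LinearMap.id_apply]
    _ = 0 := Finset.sum_eq_zero fun i _ => by
        obtain ⟨s, w, hw⟩ := hdvd i
        rw [nsmul_apply_eq_smul_apply_sub (hPρ i s) hw, hx, sub_self, map_zero, smul_zero]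

theorem exists_nsmul_eq_coboundary [Group G] (hcomm : ∀ g h : G, Commute g h)
    (hsum : ∑ i, P i = LinearMap.id) (hPρ : ∀ i g, P i ∘ₗ ρ g = χ i g • P i)
    (hPcomm : ∀ i g, P i ∘ₗ ρ g = ρ g ∘ₗ P i) (hdvd : ∀ i, ∃ s, χ i s - 1 ∣ (m : R))
    {f : G → N} (hf : ∀ g h, f (g * h) = f g + ρ g (f h)) :
    ∃ y, ∀ g, m • f g = ρ g y - y := by
  choose s w hw using hdvd
  refine ⟨∑ i, w i • P i (f (s i)), fun g => ?_⟩
  calc m • f g = ∑ i, m • P i (f g) := by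
        rw [← Finset.smul_sum, ← LinearMap.sum_apply, hsum, LinearMap.id_apply]
    _ = ∑ i, (ρ g (w i • P i (f (s i))) - w i • P i (f (s i))) :=
        Finset.sum_congr rfl fun i _ => by
          rw [nsmul_apply_eq_smul_apply_sub (hPρ i (s i)) (hw i),
            cocycle_sub_eq_of_commute (ρ := fun g => ρ g) hf (hcomm _ _), map_sub,
            ← LinearMap.comp_apply (P i), hPcomm, LinearMap.comp_apply, smul_sub, map_smul]
    _ = ρ g (∑ i, w i • P i (f (s i))) - ∑ i, w i • P i (f (s i)) := by
        rw [map_sum, Finset.sum_sub_distrib]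

end ScalarProjections

theorem Zhat.exists_unit_pow_sub_one_dvd {D : ℕ} (hD : D ≠ 0) :
    ∃ u : Zhatˣ, ∃ m : ℕ, 0 < m ∧ (u : Zhat) ^ D - 1 ∣ (m : Zhat) := by
  let c : Nat.Primes → ℕ := fun p => if (p : ℕ) = 2 then 3 else 2
  have hc : ∀ p : Nat.Primes, ¬(p : ℕ) ∣ c p ∧ c p ^ D - 1 ∣ (2 ^ D - 1) * (3 ^ D - 1) := by
    intro p
    by_cases hp : (p : ℕ) = 2
    · simp only [c, hp, if_true]
      exact ⟨by norm_num, Dvd.intro_left _ rfl⟩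
    · simp only [c, hp, if_false]
      exact ⟨fun h => hp ((Nat.prime_dvd_prime_iff_eq p.2 Nat.prime_two).1 h),
        Dvd.intro _ rfl⟩
  have hu : IsUnit (fun p => (c p : ℤ_[(p : ℕ)]) : Zhat) :=
    Pi.isUnit_iff.2 fun p => PadicInt.isUnit_natCast_of_not_dvd (hc p).1
  refine ⟨hu.unit, (2 ^ D - 1) * (3 ^ D - 1), Nat.mul_pos ?_ ?_, pi_dvd_iff.2 fun p => ?_⟩
  · exact Nat.sub_pos_of_lt (Nat.one_lt_two_pow hD)
  · exact Nat.sub_pos_of_lt (Nat.one_lt_pow hD (by norm_num))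
  · have hcast : ((c p ^ D - 1 : ℕ) : ℤ_[(p : ℕ)]) = (c p : ℤ_[(p : ℕ)]) ^ D - 1 := by
      rw [Nat.cast_sub (Nat.one_le_pow _ _ (by simp only [c]; split_ifs <;> norm_num))]
      push_cast; rfl
    simpa [hcast] using Nat.cast_dvd_cast (α := ℤ_[(p : ℕ)]) (hc p).2

theorem exists_forall_exists_val_sub_one_dvd {G ι : Type*} [Group G] [Fintype ι]
    (χ : ι → G →* Zhatˣ) (hχ : ∀ i, ∃ d : ℕ, 0 < d ∧ ∀ u : Zhatˣ, u ^ d ∈ (χ i).range) :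
    ∃ m : ℕ, 0 < m ∧ ∀ i, ∃ s : G, (χ i s : Zhat) - 1 ∣ (m : Zhat) := by
  choose d hd hrange using hχ
  obtain ⟨u, m, hm, hdvd⟩ :=
    Zhat.exists_unit_pow_sub_one_dvd (Finset.prod_ne_zero_iff.2 fun i _ => (hd i).ne')
  refine ⟨m, hm, fun i => ?_⟩
  obtain ⟨k, hk⟩ := Finset.dvd_prod_of_mem d (Finset.mem_univ i)
  obtain ⟨s, hs⟩ := hrange i (u ^ k)
  refine ⟨s, ?_⟩
  rwa [hs, ← pow_mul', ← hk, Units.val_pow_eq_pow_val]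

theorem h0_finite_and_h1_finite_exponent_of_full_generalized_homotheties_general
    (M : Type) [AddCommGroup M] [Module Zhat M] [Module.Free Zhat M] [Module.Finite Zhat M]
    (n : ℕ) (Msub : Fin n → Submodule Zhat M)
    (hinternal : DirectSum.IsInternal Msub)
    (T : Subgroup (M ≃ₗ[Zhat] M))
    (χ : Fin n → (T →* (Zhat)ˣ))
    -- each `t ∈ T` acts on `M_i` as the homothety by `χ i t`:
    (hhomothety : ∀ (t : T) (i : Fin n), ∀ x ∈ Msub i,
      (t : M ≃ₗ[Zhat] M) x = (χ i t : Zhat) • x)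
    -- fullness: each `T_i` has finite coexponent …
    (hcoexp : ∀ i : Fin n, ∃ d : ℕ, 0 < d ∧ ∀ u : (Zhat)ˣ, u ^ d ∈ (χ i).range) :
    ({x : M ⊗[Zhat] QZ | ∀ t : T,
        LinearMap.rTensor QZ ((t : M ≃ₗ[Zhat] M) : M →ₗ[Zhat] M) x = x}.Finite) ∧
      (∃ m : ℕ, 0 < m ∧ ∀ f : T → M ⊗[Zhat] QZ,
        (letI : TopologicalSpace T :=
          TopologicalSpace.induced (fun t : T => fun i : Fin n => χ i t) inferInstance
         IsLocallyConstant f) →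
        (∀ t t' : T, f (t * t') =
          f t + LinearMap.rTensor QZ ((t : M ≃ₗ[Zhat] M) : M →ₗ[Zhat] M) (f t')) →
        ∃ x : M ⊗[Zhat] QZ, ∀ t : T,
          m • f t = LinearMap.rTensor QZ ((t : M ≃ₗ[Zhat] M) : M →ₗ[Zhat] M) x - x) := by
  obtain ⟨m, hm, hdvd⟩ := exists_forall_exists_val_sub_one_dvd χ hcoexp
  have hsum : ∑ i, (hinternal.proj i).rTensor QZ = LinearMap.id := by
    rw [← LinearMap.rTensor_id, ← hinternal.sum_proj]
    exact (map_sum (LinearMap.rTensorHom QZ) _ _).symm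
  have hPρ (i : Fin n) (t : T) : (hinternal.proj i).rTensor QZ ∘ₗ (t : M →ₗ[Zhat] M).rTensor QZ =
      (χ i t : Zhat) • (hinternal.proj i).rTensor QZ := by
    rw [← LinearMap.rTensor_comp, hinternal.proj_comp (hhomothety t) i, LinearMap.rTensor_smul]
  have hρP (i : Fin n) (t : T) : (t : M →ₗ[Zhat] M).rTensor QZ ∘ₗ (hinternal.proj i).rTensor QZ =
      (χ i t : Zhat) • (hinternal.proj i).rTensor QZ := by
    rw [← LinearMap.rTensor_comp, hinternal.comp_proj (hhomothety t) i, LinearMap.rTensor_smul]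
  have hcomm (s t : T) : Commute s t := Subtype.ext <| LinearEquiv.ext fun x =>
    LinearMap.congr_fun (hinternal.commute (hhomothety s) (hhomothety t)).eq x
  refine ⟨(TensorProduct.finite_setOf_nsmul_eq_zero_of_free
    (QZ.finite_setOf_nsmul_eq_zero hm.ne')).subset fun x hx =>
      nsmul_eq_zero_of_forall_apply_eq_self hsum hPρ hdvd hx,
    m, hm, fun f _ hf => exists_nsmul_eq_coboundary hcomm hsum hPρ
      (fun i t => (hPρ i t).trans (hρP i t).symm) hdvd hf⟩

/-- Let `M` be a finite free `Ẑ`-module with a decomposition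
`M = ⊕_{i=1}^n M_i` into nonzero finite free submodules, and let `T ⊆ Aut_Ẑ(M)` be a
closed subgroup of generalized homotheties with respect to this decomposition (each
`t ∈ T` acts on `M_i` by the scalar `χ i t ∈ Ẑˣ`), which is full: each image
`T_i = (χ i).range` has finite coexponent in `Ẑˣ` and each kernel `ker (χ i)` has finite
exponent.  Then `H⁰(T, M ⊗ ℚ/ℤ)` is finite and `H¹(T, M ⊗ ℚ/ℤ)` has finite exponent.
(`T` carries the topology induced by the scalars; cohomology classes are represented by
locally constant cocycles with values in the discrete module `M ⊗ ℚ/ℤ`.) -/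
theorem h0_finite_and_h1_finite_exponent_of_full_generalized_homotheties
    (M : Type) [AddCommGroup M] [Module Zhat M] [Module.Free Zhat M] [Module.Finite Zhat M]
    (n : ℕ) (hn : 0 < n) (Msub : Fin n → Submodule Zhat M)
    (hinternal : DirectSum.IsInternal Msub)
    (hnonzero : ∀ i, Msub i ≠ ⊥)
    (hfree : ∀ i, Module.Free Zhat (Msub i))
    (T : Subgroup (M ≃ₗ[Zhat] M))
    (χ : Fin n → (T →* (Zhat)ˣ))
    -- each `t ∈ T` acts on `M_i` as the homothety by `χ i t`:
    (hhomothety : ∀ (t : T) (i : Fin n), ∀ x ∈ Msub i,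
      (t : M ≃ₗ[Zhat] M) x = (χ i t : Zhat) • x)
    -- `T` is closed (in the topology of the scalars through which it acts):
    (hT_closed : IsClosed (Set.range fun t : T => fun i : Fin n => χ i t))
    -- fullness: each `T_i` has finite coexponent …
    (hcoexp : ∀ i : Fin n, ∃ d : ℕ, 0 < d ∧ ∀ u : (Zhat)ˣ, u ^ d ∈ (χ i).range)
    -- … and each kernel `T ↠ T_i` has finite exponent:
    (hker : ∀ i : Fin n, ∃ e : ℕ, 0 < e ∧ ∀ t ∈ (χ i).ker, t ^ e = 1) :
    ({x : M ⊗[Zhat] QZ | ∀ t : T,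
        LinearMap.rTensor QZ ((t : M ≃ₗ[Zhat] M) : M →ₗ[Zhat] M) x = x}.Finite) ∧
      (∃ m : ℕ, 0 < m ∧ ∀ f : T → M ⊗[Zhat] QZ,
        (letI : TopologicalSpace T :=
          TopologicalSpace.induced (fun t : T => fun i : Fin n => χ i t) inferInstance
         IsLocallyConstant f) →
        (∀ t t' : T, f (t * t') =
          f t + LinearMap.rTensor QZ ((t : M ≃ₗ[Zhat] M) : M →ₗ[Zhat] M) (f t')) →
        ∃ x : M ⊗[Zhat] QZ, ∀ t : T,
          m • f t = LinearMap.rTensor QZ ((t : M ≃ₗ[Zhat] M) : M →ₗ[Zhat] M) x - x) :=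
  h0_finite_and_h1_finite_exponent_of_full_generalized_homotheties_general M n Msub hinternal T χ
    hhomothety hcoexp
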